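/- Let n ≥ 2, β > 0, γ > 0 and α a real number with α − (n−1)β > 0. Then the normalization constant 𝒵 = ∫_{0 ≤ x₁ ≤ … ≤ xₙ} ∏_{i=1}^n x_i^{α−(n−1)β−1} e^{−γ x_i²} · ∏_{1≤i<j≤n} (x_j² − x_i²)^β dx₁ … dxₙ is finite (and strictly positive). -/

import Mathlib

/-!
On the ordered cone `0 ≤ x₁ ≤ … ≤ xₙ` every factor `xⱼ² - xᵢ²` is at most `M²` with
`M = ∏ₖ max xₖ 1`, so the integrand is dominated by a product of one-variable functions
`t ^ a * exp (-γ t²) * max t 1 ^ c`, each integrable on `[0, ∞)` because `a > -1`.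
Positivity: the integrand is positive on strictly increasing positive vectors, a set
containing a box of volume one.
-/

open MeasureTheory Finset Set Real

lemma integrableOn_rpow_mul_exp_neg_mul_sq_mul_max_one_rpow {a c γ : ℝ} (hγ : 0 < γ)
    (ha : -1 < a) (hc : 0 ≤ c) :
    IntegrableOn (fun t : ℝ => t ^ a * exp (-γ * t ^ 2) * max t 1 ^ c) (Ici 0) := by
  rw [integrableOn_Ici_iff_integrableOn_Ioi]
  have hdom : IntegrableOn
      (fun t : ℝ => t ^ a * exp (-γ * t ^ 2) + t ^ (a + c) * exp (-γ * t ^ 2)) (Ioi 0) :=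
    (integrableOn_rpow_mul_exp_neg_mul_sq hγ ha).add
      (integrableOn_rpow_mul_exp_neg_mul_sq hγ (by linarith))
  refine hdom.mono' (by fun_prop) ((ae_restrict_iff' measurableSet_Ioi).2 (ae_of_all _ ?_))
  intro t (ht : 0 < t)
  have hmax : max t 1 ^ c ≤ 1 + t ^ c := by
    rcases le_total t 1 with h | h
    · rw [max_eq_right h, one_rpow]; linarith [rpow_nonneg ht.le c]
    · rw [max_eq_left h]; linarith
  rw [norm_of_nonneg (by positivity), rpow_add ht]
  calc t ^ a * exp (-γ * t ^ 2) * max t 1 ^ c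
      ≤ t ^ a * exp (-γ * t ^ 2) * (1 + t ^ c) := by gcongr
    _ = _ := by ring

/-- `exp (-2 V x)` for the potential `V` of the paper, with `a = α - (n - 1) β - 1`. -/
noncomputable def eigenvalueDensity (n : ℕ) (a β γ : ℝ) (x : Fin n → ℝ) : ℝ :=
  (∏ i, x i ^ a * exp (-γ * x i ^ 2)) *
    ∏ p ∈ univ.filter (fun p : Fin n × Fin n => p.1 < p.2), (x p.2 ^ 2 - x p.1 ^ 2) ^ β

variable {n : ℕ} {a β γ : ℝ}

lemma measurable_eigenvalueDensity : Measurable (eigenvalueDensity n a β γ) := by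
  unfold eigenvalueDensity
  fun_prop

lemma prod_sq_sub_sq_rpow_le {x : Fin n → ℝ} (hx : ∀ i, 0 ≤ x i) (hmono : Monotone x)
    (hβ : 0 ≤ β) :
    ∏ p ∈ univ.filter (fun p : Fin n × Fin n => p.1 < p.2), (x p.2 ^ 2 - x p.1 ^ 2) ^ β ≤
      ∏ i, max (x i) 1 ^ (2 * β * #(univ.filter (fun p : Fin n × Fin n => p.1 < p.2))) := by
  set P := univ.filter (fun p : Fin n × Fin n => p.1 < p.2)
  set M := ∏ i, max (x i) 1
  have hmax : ∀ i, 0 ≤ max (x i) 1 := fun i => (hx i).trans (le_max_left _ _)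
  have hM : 0 ≤ M := prod_nonneg fun i _ => hmax i
  have hgap : ∀ p ∈ P, 0 ≤ x p.2 ^ 2 - x p.1 ^ 2 := fun p hp => by
    have := pow_le_pow_left₀ (hx p.1) (hmono (mem_filter.1 hp).2.le) 2
    linarith
  have hfactor : ∀ p ∈ P, (x p.2 ^ 2 - x p.1 ^ 2) ^ β ≤ M ^ (2 * β) := by
    intro p hp
    have hxM : x p.2 ≤ M := le_prod_max_one (mem_univ _) x
    calc (x p.2 ^ 2 - x p.1 ^ 2) ^ β ≤ (M ^ 2) ^ β := by
          gcongr
          · exact hgap p hp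
          · nlinarith [sq_nonneg (x p.1), hx p.2]
      _ = M ^ (2 * β) := by rw [← rpow_natCast, ← rpow_mul hM]; norm_num
  calc ∏ p ∈ P, (x p.2 ^ 2 - x p.1 ^ 2) ^ β ≤ ∏ _p ∈ P, M ^ (2 * β) :=
        prod_le_prod (fun p hp => rpow_nonneg (hgap p hp) _) hfactor
    _ = ∏ i, max (x i) 1 ^ (2 * β * #P) := by
      rw [prod_const, ← rpow_mul_natCast hM, finsetProd_rpow _ _ fun i _ => hmax i]

lemma eigenvalueDensity_le_prod {x : Fin n → ℝ} (hx : ∀ i, 0 ≤ x i) (hmono : Monotone x)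
    (hβ : 0 ≤ β) :
    eigenvalueDensity n a β γ x ≤
      ∏ i, x i ^ a * exp (-γ * x i ^ 2) *
        max (x i) 1 ^ (2 * β * #(univ.filter (fun p : Fin n × Fin n => p.1 < p.2))) := by
  rw [prod_mul_distrib]
  exact mul_le_mul_of_nonneg_left (prod_sq_sub_sq_rpow_le hx hmono hβ)
    (prod_nonneg fun i _ => by have := hx i; positivity)

lemma setLIntegral_eigenvalueDensity_lt_top {S : Set (Fin n → ℝ)}
    (hS : ∀ x ∈ S, (∀ i, 0 ≤ x i) ∧ Monotone x) (hγ : 0 < γ) (ha : -1 < a)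
    (hβ : 0 ≤ β) :
    ∫⁻ x in S, ENNReal.ofReal (eigenvalueDensity n a β γ x) < ⊤ := by
  set c := 2 * β * #(univ.filter (fun p : Fin n × Fin n => p.1 < p.2))
  set w : ℝ → ℝ := fun t => t ^ a * exp (-γ * t ^ 2) * max t 1 ^ c
  have hw : IntegrableOn (fun x : Fin n → ℝ => ∏ i, w (x i)) (univ.pi fun _ => Ici 0) := by
    rw [IntegrableOn, volume_pi, Measure.restrict_pi_pi]
    exact Integrable.fintype_prod fun _ =>
      integrableOn_rpow_mul_exp_neg_mul_sq_mul_max_one_rpow hγ ha (by positivity)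
  calc ∫⁻ x in S, ENNReal.ofReal (eigenvalueDensity n a β γ x)
      ≤ ∫⁻ x in S, ENNReal.ofReal (∏ i, w (x i)) :=
        setLIntegral_mono (by fun_prop) fun x hx =>
          ENNReal.ofReal_le_ofReal (eigenvalueDensity_le_prod (hS x hx).1 (hS x hx).2 hβ)
    _ ≤ ∫⁻ x in univ.pi fun _ => Ici 0, ENNReal.ofReal (∏ i, w (x i)) :=
        lintegral_mono_set fun x hx i _ => (hS x hx).1 i
    _ < ⊤ := hw.lintegral_lt_top

lemma eigenvalueDensity_pos {x : Fin n → ℝ} (hx : ∀ i, 0 < x i) (hmono : StrictMono x) :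
    0 < eigenvalueDensity n a β γ x := by
  refine mul_pos (prod_pos fun i _ => by have := hx i; positivity) (prod_pos fun p hp => ?_)
  have := pow_lt_pow_left₀ (hmono (mem_filter.1 hp).2) (hx p.1).le two_ne_zero
  exact rpow_pos_of_pos (by linarith) _

lemma volume_setOf_pos_strictMono_pos :
    0 < volume {x : Fin n → ℝ | (∀ i, 0 < x i) ∧ StrictMono x} := by
  have hbox : univ.pi (fun i : Fin n => Ioo (i : ℝ) (i + 1)) ⊆
      {x | (∀ i, 0 < x i) ∧ StrictMono x} := by
    intro x hx
    have hx' : ∀ i : Fin n, (i : ℝ) < x i ∧ x i < i + 1 := fun i => hx i (mem_univ i)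
    refine ⟨fun i => (Nat.cast_nonneg _).trans_lt (hx' i).1, fun i j hij => ?_⟩
    have : (i : ℝ) + 1 ≤ j := by exact_mod_cast hij
    linarith [(hx' i).2, (hx' j).1]
  refine lt_of_lt_of_le ?_ (measure_mono hbox)
  simp [volume_pi_pi]

lemma setLIntegral_eigenvalueDensity_pos {S : Set (Fin n → ℝ)}
    (hS : ∀ x : Fin n → ℝ, (∀ i, 0 < x i) → StrictMono x → x ∈ S) :
    0 < ∫⁻ x in S, ENNReal.ofReal (eigenvalueDensity n a β γ x) := by
  rw [setLIntegral_pos_iff measurable_eigenvalueDensity.ennreal_ofReal]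
  refine volume_setOf_pos_strictMono_pos.trans_le
    (measure_mono fun x ⟨hx, hmono⟩ => ⟨?_, hS x hx hmono⟩)
  simpa using eigenvalueDensity_pos hx hmono

/-- The normalization constant of the stationary measure of the eigenvalue SDE
(Proposition 2.6 of the paper) is finite and strictly positive. -/
theorem stmt_6 (n : ℕ) (hn : 2 ≤ n) (α β γ : ℝ) (hβ : 0 < β) (hγ : 0 < γ)
    (hαβ : 0 < α - ((n : ℝ) - 1) * β) :
    0 < (∫⁻ x in {x : Fin n → ℝ | 0 ≤ x ⟨0, by omega⟩ ∧ Monotone x},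
          ENNReal.ofReal
            ((∏ i : Fin n,
                (x i) ^ (α - ((n : ℝ) - 1) * β - 1) * Real.exp (-γ * (x i)^2)) *
              ∏ p ∈ Finset.univ.filter (fun p : Fin n × Fin n => p.1 < p.2),
                ((x p.2)^2 - (x p.1)^2) ^ β)) ∧
    (∫⁻ x in {x : Fin n → ℝ | 0 ≤ x ⟨0, by omega⟩ ∧ Monotone x},
          ENNReal.ofReal
            ((∏ i : Fin n,
                (x i) ^ (α - ((n : ℝ) - 1) * β - 1) * Real.exp (-γ * (x i)^2)) *
              ∏ p ∈ Finset.univ.filter (fun p : Fin n × Fin n => p.1 < p.2),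
                ((x p.2)^2 - (x p.1)^2) ^ β)) < ⊤ := by
  have hS : ∀ x ∈ {x : Fin n → ℝ | 0 ≤ x ⟨0, by omega⟩ ∧ Monotone x},
      (∀ i, 0 ≤ x i) ∧ Monotone x :=
    fun x ⟨hx0, hmono⟩ => ⟨fun i => hx0.trans (hmono (Nat.zero_le i.val)), hmono⟩
  exact ⟨setLIntegral_eigenvalueDensity_pos fun x hx hmono => ⟨(hx _).le, hmono.monotone⟩,
    setLIntegral_eigenvalueDensity_lt_top hS hγ (by linarith) hβ.le⟩
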